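/- If the sandwich matrix P of a completely 0-simple Rees matrix semigroup M⁰[G,P] has all entries in G (no zero entries) and G has exponent p, then M⁰[G,P] satisfies the identity x^{p+1} = x. Consequently no proper 3-nilpotent semigroup lies in the variety it generates, since x^{p+1} = x fails in every proper 3-nilpotent semigroup. -/
import Mathlib


/-- `iterMul m x n = x^(n+1)` with respect to the binary operation `m`. -/
def iterMul {α : Type*} (m : α → α → α) (x : α) : ℕ → α
  | 0 => x
  | n + 1 => m (iterMul m x n) x

/-- `pw x n = x^(n+1)` in a semigroup. -/
def pw {S : Type*} [Mul S] (x : S) : ℕ → S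
  | 0 => x
  | n + 1 => pw x n * x

/-- If the sandwich matrix `P` of the Rees matrix semigroup with zero `M⁰[G,P]` has all
entries in `G` (no zero entries) and `G` has exponent `p`, then `M⁰[G,P]` satisfies the
identity `x^{p+1} = x`; consequently no proper 3-nilpotent semigroup satisfies the
identities of `M⁰[G,P]`, since `x^{p+1} = x` fails in every proper 3-nilpotent
semigroup. -/
theorem stmt14 {G : Type*} [Group G] {I Λ : Type*} [Nonempty I] [Nonempty Λ]
    (P : Λ → I → Option G) (hall : ∀ (l : Λ) (i : I), P l i ≠ none)
    (p : ℕ) (hp : 0 < p) (hexp : ∀ g : G, g ^ p = 1)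
    (hleast : ∀ q : ℕ, 0 < q → (∀ g : G, g ^ q = 1) → p ≤ q) :
    let R := Option (I × G × Λ)
    let m : R → R → R := fun x y =>
      match x, y with
      | some (i, g, l), some (j, h, r) =>
        match P l j with
        | some q => some (i, g * q * h, r)
        | none => none
      | _, _ => none
    (∀ x : R, iterMul m x p = x) ∧
    (∀ (N : Type) (_ : SemigroupWithZero N), (∀ x : N, pw x p = x) →
      ¬ ((∀ a b c : N, a * b * c = 0) ∧ (∃ a b : N, a * b ≠ 0))) := by
  intro R m
  constructor
  · intro x
    match x with
    | none =>
      have hnone : ∀ n, iterMul m (none : R) n = none := by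
        intro n; induction n with
        | zero => rfl
        | succ k ih => simp [iterMul, ih, m]
      exact hnone p
    | some (i, g, l) =>
      obtain ⟨q, hq⟩ : ∃ q, P l i = some q := by
        cases h : P l i with
        | none => exact absurd h (hall l i)
        | some q => exact ⟨q, rfl⟩
      have key : ∀ n, iterMul m (some (i, g, l) : R) n = some (i, (g * q) ^ n * g, l) := by
        intro n; induction n with
        | zero => simp [iterMul]
        | succ k ih =>
          simp only [iterMul, ih, m, hq]
          congr 1
          ext
          · rfl
          · simp [pow_succ, mul_assoc]
          · rfl
      rw [key p, hexp (g * q), one_mul]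
  · rintro N _ hid ⟨hzero, a, b, hab⟩
    have hz : ∀ n, 0 < n → pw (a * b) n = 0 := by
      intro n hn
      induction n with
      | zero => omega
      | succ k ih =>
        cases Nat.eq_zero_or_pos k with
        | inl h => subst h; simpa [pw] using hzero a b (a * b)
        | inr h => simp [pw, ih h]
    exact hab (by rw [← hid (a * b), hz p hp])
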